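/- arXiv:2311.01614 — 3 statements merged into one kernel-verified Lean document; each statement's English description precedes it below -/
import Mathlib

section
/- Let polytopes P_i ⊂ ℝ^d with Minkowski sum M satisfy the required-flexibility and projection-feasibility assumptions, and let v^j be the summed extreme actions for j ∈ {-1,1}^d. For t ∈ {2,...,d}, if p ∈ ℝ^d agrees with v^j in its first t-1 coordinates, and p_t > v^j_t when j_t = 1 (or p_t < v^j_t when j_t = -1), then p ∉ M. -/
/-- Projection of `x` onto its first `t` components, padded with zeros. -/
def proj (d : ℕ) (t : ℕ) (x : Fin d → ℝ) : Fin d → ℝ :=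
  fun s => if (s : ℕ) < t then x s else 0

/-- A polytope is a bounded polyhedron `{x : A x ≤ b}`. -/
def IsPolytope {d : ℕ} (P : Set (Fin d → ℝ)) : Prop :=
  ∃ (k : ℕ) (A : Matrix (Fin k) (Fin d) ℝ) (b : Fin k → ℝ),
    P = {x | ∀ i, A.mulVec x i ≤ b i} ∧ Bornology.IsBounded P

/-- Assumption 2 (projection feasibility). -/
def ProjFeas {d : ℕ} (P : Set (Fin d → ℝ)) : Prop :=
  (0 : Fin d → ℝ) ∈ P ∧ ∀ x ∈ P, ∀ t : ℕ, 1 ≤ t → t ≤ d - 1 → proj d t x ∈ P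

/-- Assumption 1 (required flexibility). -/
def ReqFlex {d : ℕ} (P : Set (Fin d → ℝ)) : Prop :=
  ∀ (x : Fin d → ℝ) (t : Fin d), proj d (t : ℕ) x ∈ P →
    ∃ ε : ℝ, ε ≠ 0 ∧ Function.update (proj d (t : ℕ) x) t ε ∈ P

/-- Sign vectors `j ∈ {-1, 1}^d`. -/
def IsSign {d : ℕ} (j : Fin d → ℝ) : Prop := ∀ t, j t = 1 ∨ j t = -1

/-- `y` is the extreme action of `P` in direction `j` (Definition 1):
`y_t = j_t · max { j_t · x : (y_1, …, y_{t-1}, x, 0, …, 0) ∈ P }`. -/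
def IsExtremeAction {d : ℕ} (P : Set (Fin d → ℝ)) (j y : Fin d → ℝ) : Prop :=
  ∀ t : Fin d,
    IsGreatest
      {z : ℝ | ∃ x : ℝ, Function.update (proj d (t : ℕ) y) t x ∈ P ∧ z = j t * x}
      (j t * y t)

/-- Minkowski sum of the sets `P i`. -/
def MinkSum {d n : ℕ} (P : Fin n → Set (Fin d → ℝ)) : Set (Fin d → ℝ) :=
  {x | ∃ f : Fin n → Fin d → ℝ, (∀ i, f i ∈ P i) ∧ x = ∑ i, f i}

lemma key_le {d n : ℕ} (P : Fin n → Set (Fin d → ℝ))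
    (hA2 : ∀ i, ProjFeas (P i)) (j : Fin d → ℝ)
    (y f : Fin n → Fin d → ℝ) (hy : ∀ i, IsExtremeAction (P i) j (y i))
    (hf : ∀ i, f i ∈ P i) (s : Fin d)
    (hpr : ∀ i, ∀ r : Fin d, (r : ℕ) < (s : ℕ) → f i r = y i r) (i : Fin n) :
    j s * f i s ≤ j s * y i s := by
  have hmem : Function.update (proj d (s : ℕ) (y i)) s (f i s) ∈ P i := by
    have heq : Function.update (proj d (s : ℕ) (y i)) s (f i s)
        = proj d ((s : ℕ) + 1) (f i) := by
      funext r
      rcases eq_or_ne r s with rfl | hrs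
      · simp [proj]
      · have hrs' : (r : ℕ) ≠ (s : ℕ) := fun hh => hrs (Fin.ext hh)
        rw [Function.update_apply, if_neg hrs]
        simp only [proj]
        by_cases hlt : (r : ℕ) < (s : ℕ)
        · rw [if_pos hlt, if_pos (by omega), hpr i r hlt]
        · rw [if_neg hlt, if_neg (by omega)]
    rw [heq]
    by_cases hd : (s : ℕ) + 1 = d
    · have : proj d ((s : ℕ) + 1) (f i) = f i := by
        funext r; simp [proj, hd, r.isLt]
      rw [this]; exact hf i
    · exact (hA2 i).2 (f i) (hf i) ((s : ℕ) + 1) (by omega)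
        (by have := s.isLt; omega)
  exact (hy i s).2 ⟨f i s, hmem, rfl⟩

/-- Lemma 2: if `p` agrees with `v^j` in its first `t-1` coordinates
and exceeds `v^j_t` in direction `j_t`, then `p ∉ M`. -/
theorem exceeding_coordinate_not_in_minkowski_sum {d n : ℕ}
    (P : Fin n → Set (Fin d → ℝ))
    (hpoly : ∀ i, IsPolytope (P i))
    (hA1 : ∀ i, ReqFlex (P i)) (hA2 : ∀ i, ProjFeas (P i))
    (j : Fin d → ℝ) (hj : IsSign j)
    (y : Fin n → Fin d → ℝ) (hy : ∀ i, IsExtremeAction (P i) j (y i))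
    (p : Fin d → ℝ) (t : Fin d) (ht : 1 ≤ (t : ℕ))
    (hpre : ∀ s : Fin d, (s : ℕ) < (t : ℕ) → p s = (∑ i, y i) s)
    (h : (j t = 1 ∧ (∑ i, y i) t < p t) ∨ (j t = -1 ∧ p t < (∑ i, y i) t)) :
    p ∉ MinkSum P := by
  intro hp
  obtain ⟨f, hf, hpeq⟩ := hp
  have hps : ∀ s : Fin d, p s = ∑ i, f i s := by
    intro s; rw [hpeq]; simp [Finset.sum_apply]
  have hys : ∀ s : Fin d, (∑ i, y i) s = ∑ i, y i s := by
    intro s; simp [Finset.sum_apply]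
  have hjne : ∀ s : Fin d, j s ≠ 0 := by
    intro s; rcases hj s with hs | hs <;> rw [hs] <;> norm_num
  have hpref : ∀ m : ℕ, m ≤ (t : ℕ) → ∀ i, ∀ r : Fin d, (r : ℕ) < m → f i r = y i r := by
    intro m
    induction m with
    | zero => intro _ i r hr; omega
    | succ m ih =>
      intro hm i r hr
      rcases (by omega : (r : ℕ) < m ∨ (r : ℕ) = m) with h' | h'
      · exact ih (by omega) i r h'
      · have hrt : (r : ℕ) < (t : ℕ) := by omega
        have hpr : ∀ i', ∀ q : Fin d, (q : ℕ) < (r : ℕ) → f i' q = y i' q := by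
          intro i' q hq; exact ih (by omega) i' q (by omega)
        have hle : ∀ i' ∈ Finset.univ, j r * f i' r ≤ j r * y i' r :=
          fun i' _ => key_le P hA2 j y f hy hf r hpr i'
        have hsum : ∑ i' : Fin n, j r * f i' r = ∑ i' : Fin n, j r * y i' r := by
          rw [← Finset.mul_sum, ← Finset.mul_sum, ← hps r, hpre r hrt, hys r]
        have := (Finset.sum_eq_sum_iff_of_le hle).1 hsum i (Finset.mem_univ i)
        exact mul_left_cancel₀ (hjne r) this
  have hpr : ∀ i, ∀ q : Fin d, (q : ℕ) < (t : ℕ) → f i q = y i q :=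
    fun i q hq => hpref (t : ℕ) le_rfl i q hq
  have hle : ∀ i ∈ Finset.univ, j t * f i t ≤ j t * y i t :=
    fun i _ => key_le P hA2 j y f hy hf t hpr i
  have hsle : j t * p t ≤ j t * (∑ i, y i) t := by
    rw [hps t, hys t, Finset.mul_sum, Finset.mul_sum]
    exact Finset.sum_le_sum hle
  rcases h with ⟨hj1, hlt⟩ | ⟨hj1, hlt⟩ <;> rw [hj1] at hsle <;> nlinarith
end

section
/- Let polytopes P_i ⊂ ℝ^d with Minkowski sum M satisfy the required-flexibility and projection-feasibility assumptions, and let A = Conv({v^j : j ∈ {-1,1}^d}). If v^j = t·p + (1-t)·q with p, q ∈ M and t ∈ (0,1), then p ∈ A and q ∈ A. -/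
/-! The sum `v k` of extreme actions is an extreme point of the Minkowski sum, so `p = q = v k`.
Induct on the coordinate `T`: once the summands of `p` and `q` agree with the extreme actions before
`T`, projection feasibility makes the truncation of each summand after `T` a candidate in the
maximum defining the extreme action at `T`. Each summand is therefore dominated at `T` in direction
`k T`, and a proper convex combination of dominated sums reaches the bound only if every summand
attains it. -/

lemma IsSign.ne_zero {d : ℕ} {j : Fin d → ℝ} (hj : IsSign j) (s : Fin d) : j s ≠ 0 := by
  rcases hj s with h | h <;> norm_num [h]

lemma proj_of_le {d m : ℕ} (hm : d ≤ m) (x : Fin d → ℝ) : proj d m x = x := by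
  funext s
  simp [proj, s.isLt.trans_le hm]

lemma proj_congr {d m : ℕ} {x y : Fin d → ℝ} (h : ∀ s : Fin d, (s : ℕ) < m → x s = y s) :
    proj d m x = proj d m y := by
  funext s
  by_cases hs : (s : ℕ) < m <;> simp [proj, hs, h]

lemma update_proj_self {d : ℕ} (x : Fin d → ℝ) (T : Fin d) :
    Function.update (proj d T x) T (x T) = proj d (T + 1) x := by
  funext s
  rcases eq_or_ne s T with rfl | hs
  · simp [proj]
  · have hlt : (s : ℕ) < T ↔ (s : ℕ) < T + 1 := by
      have := Fin.val_ne_of_ne hs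
      omega
    simp [Function.update_of_ne hs, proj, hlt]

lemma ProjFeas.proj_mem {d : ℕ} {P : Set (Fin d → ℝ)} (hP : ProjFeas P) {x : Fin d → ℝ}
    (hx : x ∈ P) (m : ℕ) : proj d m x ∈ P := by
  rcases Nat.eq_zero_or_pos m with rfl | hm
  · convert hP.1
    funext s
    simp [proj]
  · rcases le_or_gt d m with hdm | hmd
    · rwa [proj_of_le hdm]
    · exact hP.2 x hx m hm (by omega)

lemma IsExtremeAction.mul_apply_le {d : ℕ} {P : Set (Fin d → ℝ)} {j y : Fin d → ℝ}
    (hy : IsExtremeAction P j y) (hP : ProjFeas P) {x : Fin d → ℝ} (hx : x ∈ P) (T : Fin d)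
    (hxy : ∀ s : Fin d, s < T → x s = y s) : j T * x T ≤ j T * y T := by
  have hmem : Function.update (proj d T y) T (x T) ∈ P := by
    rw [← proj_congr hxy, update_proj_self]
    exact hP.proj_mem hx _
  exact (hy T).2 ⟨x T, hmem, rfl⟩

lemma eq_of_le_of_sum_eq_convex_combination {ι : Type*} [Fintype ι] {a b c : ι → ℝ} {t : ℝ}
    (ht : t ∈ Set.Ioo (0 : ℝ) 1) (hac : ∀ i, a i ≤ c i) (hbc : ∀ i, b i ≤ c i)
    (h : ∑ i, c i = t * ∑ i, a i + (1 - t) * ∑ i, b i) : a = c ∧ b = c := by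
  obtain ⟨ht0, ht1⟩ := ht
  have hA : ∑ i, a i ≤ ∑ i, c i := Finset.sum_le_sum fun i _ => hac i
  have hB : ∑ i, b i ≤ ∑ i, c i := Finset.sum_le_sum fun i _ => hbc i
  have hAeq : ∑ i, a i = ∑ i, c i := by nlinarith
  have hBeq : ∑ i, b i = ∑ i, c i := by nlinarith
  constructor <;> funext i
  · exact (Finset.sum_eq_sum_iff_of_le fun i _ => hac i).1 hAeq i (Finset.mem_univ i)
  · exact (Finset.sum_eq_sum_iff_of_le fun i _ => hbc i).1 hBeq i (Finset.mem_univ i)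

lemma eq_extremeAction_of_sum_eq_convex_combination {d n : ℕ} {P : Fin n → Set (Fin d → ℝ)}
    (hP : ∀ i, ProjFeas (P i)) {j : Fin d → ℝ} (hj : IsSign j) {y f g : Fin n → Fin d → ℝ}
    (hy : ∀ i, IsExtremeAction (P i) j (y i)) (hf : ∀ i, f i ∈ P i) (hg : ∀ i, g i ∈ P i)
    {t : ℝ} (ht : t ∈ Set.Ioo (0 : ℝ) 1) (h : ∑ i, y i = t • ∑ i, f i + (1 - t) • ∑ i, g i) :
    f = y ∧ g = y := by
  suffices hcoord : ∀ T : Fin d, ∀ i, f i T = y i T ∧ g i T = y i T by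
    exact ⟨funext fun i => funext fun T => (hcoord T i).1,
      funext fun i => funext fun T => (hcoord T i).2⟩
  intro T
  induction T using WellFoundedLT.induction with
  | _ T ih =>
    have hT : ∑ i, j T * y i T = t * ∑ i, j T * f i T + (1 - t) * ∑ i, j T * g i T := by
      have := congrArg (j T * · T) h
      simpa [Finset.sum_apply, Finset.mul_sum, mul_add, mul_left_comm (j T)] using this
    obtain ⟨hfT, hgT⟩ := eq_of_le_of_sum_eq_convex_combination ht
      (fun i => (hy i).mul_apply_le (hP i) (hf i) T fun s hs => (ih s hs i).1)
      (fun i => (hy i).mul_apply_le (hP i) (hg i) T fun s hs => (ih s hs i).2) hT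
    exact fun i => ⟨mul_left_cancel₀ (hj.ne_zero T) (congrFun hfT i),
      mul_left_cancel₀ (hj.ne_zero T) (congrFun hgT i)⟩

theorem proper_convex_combination_in_approximation_general {d n : ℕ}
    (P : Fin n → Set (Fin d → ℝ))
    (hA2 : ∀ i, ProjFeas (P i))
    (v : (Fin d → ℝ) → Fin d → ℝ)
    (hv : ∀ j, IsSign j → ∃ y : Fin n → Fin d → ℝ,
      (∀ i, IsExtremeAction (P i) j (y i)) ∧ v j = ∑ i, y i)
    (k : Fin d → ℝ) (hk : IsSign k)
    (p q : Fin d → ℝ) (hp : p ∈ MinkSum P) (hq : q ∈ MinkSum P)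
    (t : ℝ) (ht : t ∈ Set.Ioo (0 : ℝ) 1)
    (hcomb : v k = t • p + (1 - t) • q) :
    p ∈ convexHull ℝ (v '' {j | IsSign j}) ∧
    q ∈ convexHull ℝ (v '' {j | IsSign j}) := by
  obtain ⟨y, hy, hvk⟩ := hv k hk
  obtain ⟨f, hf, rfl⟩ := hp
  obtain ⟨g, hg, rfl⟩ := hq
  obtain ⟨hfy, hgy⟩ :=
    eq_extremeAction_of_sum_eq_convex_combination hA2 hk hy hf hg ht (hvk ▸ hcomb)
  have hmem : v k ∈ convexHull ℝ (v '' {j | IsSign j}) := subset_convexHull ℝ _ ⟨k, hk, rfl⟩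
  rw [hfy, hgy, ← hvk]
  exact ⟨hmem, hmem⟩

/-- Proposition 2: if `v^j = t·p + (1-t)·q` with `p, q ∈ M` and
`t ∈ (0,1)`, then `p` and `q` lie in `A = Conv({v^j : j ∈ {-1,1}^d})`. -/
theorem proper_convex_combination_in_approximation {d n : ℕ}
    (P : Fin n → Set (Fin d → ℝ))
    (hpoly : ∀ i, IsPolytope (P i))
    (hA1 : ∀ i, ReqFlex (P i)) (hA2 : ∀ i, ProjFeas (P i))
    (v : (Fin d → ℝ) → Fin d → ℝ)
    (hv : ∀ j, IsSign j → ∃ y : Fin n → Fin d → ℝ,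
      (∀ i, IsExtremeAction (P i) j (y i)) ∧ v j = ∑ i, y i)
    (k : Fin d → ℝ) (hk : IsSign k)
    (p q : Fin d → ℝ) (hp : p ∈ MinkSum P) (hq : q ∈ MinkSum P)
    (t : ℝ) (ht : t ∈ Set.Ioo (0 : ℝ) 1)
    (hcomb : v k = t • p + (1 - t) • q) :
    p ∈ convexHull ℝ (v '' {j | IsSign j}) ∧
    q ∈ convexHull ℝ (v '' {j | IsSign j}) :=
  proper_convex_combination_in_approximation_general P hA2 v hv k hk p q hp hq t ht hcomb
end

section
/- Consider the energy storage polytope B(S_0, S̲, p) with α ∈ (0,1], x̲ < 0 < x̄, S̲ < S̄, S_0 ∈ [S̲, S̄], Δt > 0, and α^d·S_0 ≥ S̲. Then B(S_0, S̲, p) satisfies required flexibility: for any feasible truncated profile (x_1,...,x_t,0,...,0) ∈ B, there exists ε ≠ 0 such that (x_1,...,x_t,ε,0,...,0) ∈ B. -/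
/-- State of charge recursion `S(t) = α S(t-1) + x_t Δt`, `S(0) = S_0`. -/
def soc (d : ℕ) (α Δt S0 : ℝ) (x : Fin d → ℝ) : ℕ → ℝ
  | 0 => S0
  | t + 1 => α * soc d α Δt S0 x t + (if h : t < d then x ⟨t, h⟩ else 0) * Δt

/-- Energy storage polytope `B(S_0, S_f, p)`. -/
def Battery (d : ℕ) (α xl xu Sl Su Δt S0 Sf : ℝ) : Set (Fin d → ℝ) :=
  {x | (∀ t, xl ≤ x t ∧ x t ≤ xu) ∧
    (∀ t : ℕ, 1 ≤ t → t ≤ d - 1 → Sl ≤ soc d α Δt S0 x t ∧ soc d α Δt S0 x t ≤ Su) ∧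
    Sf ≤ soc d α Δt S0 x d ∧ soc d α Δt S0 x d ≤ Su}

lemma soc_congr (d : ℕ) (α Δt S0 : ℝ) (x y : Fin d → ℝ) :
    ∀ s : ℕ, (∀ i : Fin d, (i : ℕ) < s → x i = y i) →
      soc d α Δt S0 x s = soc d α Δt S0 y s := by
  intro s
  induction s with
  | zero => intro _; rfl
  | succ n ih =>
    intro h
    have h1 : ∀ i : Fin d, (i : ℕ) < n → x i = y i := fun i hi => h i (Nat.lt_succ_of_lt hi)
    simp only [soc, ih h1]
    by_cases hn : n < d
    · rw [dif_pos hn, dif_pos hn, h ⟨n, hn⟩ (Nat.lt_succ_self n)]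
    · rw [dif_neg hn, dif_neg hn]

lemma soc_tail (d : ℕ) (α Δt S0 : ℝ) (x : Fin d → ℝ) (t : ℕ)
    (hx : ∀ i : Fin d, t ≤ (i : ℕ) → x i = 0) :
    ∀ s : ℕ, t ≤ s → soc d α Δt S0 x s = α ^ (s - t) * soc d α Δt S0 x t := by
  intro s
  induction s with
  | zero => intro h; have : t = 0 := Nat.le_zero.mp h; subst this; simp
  | succ n ih =>
    intro h
    rcases Nat.lt_or_ge n t with h2 | h2
    · have : t = n + 1 := by omega
      subst this; simp
    · have hn' := ih h2
      have he : n + 1 - t = (n - t) + 1 := by omega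
      simp only [soc, hn']
      by_cases hn : n < d
      · rw [dif_pos hn, hx ⟨n, hn⟩ h2, he, pow_succ]; ring
      · rw [dif_neg hn, he, pow_succ]; ring

lemma soc_update (d : ℕ) (α Δt S0 : ℝ) (y : Fin d → ℝ) (t : Fin d) (hyt : y t = 0) (ε : ℝ) :
    ∀ s : ℕ, (t : ℕ) < s →
      soc d α Δt S0 (Function.update y t ε) s
        = soc d α Δt S0 y s + α ^ (s - 1 - (t : ℕ)) * ε * Δt := by
  intro s
  induction s with
  | zero => omega
  | succ n ih =>
    intro hs
    rcases Nat.lt_or_ge (t : ℕ) n with h | h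
    · have hrec := ih h
      simp only [soc, hrec]
      have hne : ∀ hn : n < d, (⟨n, hn⟩ : Fin d) ≠ t := by
        intro hn he
        have : ((⟨n, hn⟩ : Fin d) : ℕ) = (t : ℕ) := by rw [he]
        simp at this; omega
      have he : n - (t : ℕ) = (n - 1 - (t : ℕ)) + 1 := by omega
      have he2 : n + 1 - 1 - (t : ℕ) = n - (t : ℕ) := by omega
      by_cases hn : n < d
      · rw [dif_pos hn, dif_pos hn, Function.update_of_ne (hne hn), he2, he, pow_succ]; ring
      · simp only [dif_neg hn]; rw [he2, he, pow_succ]; ring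
    · have hnt : n = (t : ℕ) := by omega
      have hlt : n < d := hnt ▸ t.isLt
      have hfin : (⟨n, hlt⟩ : Fin d) = t := Fin.ext hnt
      have hcg : soc d α Δt S0 (Function.update y t ε) n = soc d α Δt S0 y n := by
        apply soc_congr
        intro i hi
        apply Function.update_of_ne
        intro h; subst h; omega
      simp only [soc, hcg, dif_pos hlt]
      rw [hfin, Function.update_self, hyt]
      have : n + 1 - 1 - (t : ℕ) = 0 := by omega
      rw [this]; ring


/-- the storage polytope `B(S_0, S̲, p)` with `α^d S_0 ≥ S̲`
satisfies required flexibility. -/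
theorem battery_required_flexibility {d : ℕ} (α xl xu Sl Su Δt S0 : ℝ)
    (hα : 0 < α ∧ α ≤ 1) (hxl : xl < 0) (hxu : 0 < xu) (hS : Sl < Su)
    (hS0 : Sl ≤ S0 ∧ S0 ≤ Su) (hΔt : 0 < Δt) (hfin : Sl ≤ α ^ d * S0) :
    ReqFlex (Battery d α xl xu Sl Su Δt S0 Sl) := by
  obtain ⟨hα0, hα1⟩ := hα
  obtain ⟨hS0l, hS0u⟩ := hS0
  intro x t hmem
  simp only [Battery, Set.mem_setOf_eq] at hmem
  obtain ⟨hxb, hmid, hflo, hfhi⟩ := hmem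
  set y := proj d (t : ℕ) x with hy
  have hyt : y t = 0 := by simp [hy, proj]
  have hyz : ∀ i : Fin d, (t : ℕ) ≤ (i : ℕ) → y i = 0 := by
    intro i hi
    simp only [hy, proj]
    rw [if_neg (by omega)]
  have htd : (t : ℕ) < d := t.isLt
  set T := soc d α Δt S0 y (t : ℕ) with hT
  have hg := soc_tail d α Δt S0 y (t : ℕ) hyz
  have hys : ∀ s : ℕ, 1 ≤ s → s ≤ d → Sl ≤ soc d α Δt S0 y s ∧ soc d α Δt S0 y s ≤ Su := by
    intro s h1 h2
    rcases eq_or_lt_of_le h2 with h | h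
    · subst h; exact ⟨hflo, hfhi⟩
    · exact hmid s h1 (by omega)
  have hTb : Sl ≤ T ∧ T ≤ Su := by
    rcases Nat.eq_zero_or_pos (t : ℕ) with h | h
    · rw [hT, h]; exact ⟨hS0l, hS0u⟩
    · exact hys (t : ℕ) h (le_of_lt htd)
  have hαpow : ∀ k : ℕ, α ^ k ≤ 1 := fun k => pow_le_one₀ (le_of_lt hα0) hα1
  have hαpos : ∀ k : ℕ, 0 < α ^ k := fun k => pow_pos hα0 k
  have key : (∀ k : ℕ, 1 ≤ k → k ≤ d - (t : ℕ) → α ^ k * T < Su) ∨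
      (∀ k : ℕ, 1 ≤ k → k ≤ d - (t : ℕ) → Sl < α ^ k * T) := by
    by_contra hcon
    push_neg at hcon
    obtain ⟨⟨k1, hk11, hk12, hk13⟩, ⟨k2, hk21, hk22, hk23⟩⟩ := hcon
    rcases lt_trichotomy T 0 with hT0 | hT0 | hT0
    · have h1 : T ≤ α ^ k2 * T := by nlinarith [hαpow k2]
      have h2 : T = Sl := le_antisymm (by linarith) hTb.1
      have h3 : α ^ k2 * T = 1 * T := by rw [one_mul]; linarith
      have h3' : α ^ k2 = 1 := mul_right_cancel₀ (ne_of_lt hT0) h3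
      have h4 : (1 : ℝ) ≤ α := by
        have := pow_le_pow_of_le_one (le_of_lt hα0) hα1 hk21
        rw [pow_one] at this; linarith
      have h5 : α = 1 := le_antisymm hα1 h4
      rw [h5, one_pow, one_mul] at hk13
      linarith [hTb.2]
    · rw [hT0, mul_zero] at hk13 hk23; linarith
    · have h1 : α ^ k1 * T ≤ T := by nlinarith [hαpow k1]
      have h2 : α ^ k1 * T = 1 * T := by rw [one_mul]; linarith [hTb.2]
      have h2' : α ^ k1 = 1 := mul_right_cancel₀ (ne_of_gt hT0) h2
      have h4 : (1 : ℝ) ≤ α := by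
        have := pow_le_pow_of_le_one (le_of_lt hα0) hα1 hk11
        rw [pow_one] at this; linarith
      have h5 : α = 1 := le_antisymm hα1 h4
      rw [h5, one_pow, one_mul] at hk13 hk23
      linarith
  have hKne : (Finset.Icc 1 (d - (t : ℕ))).Nonempty := by
    rw [Finset.nonempty_Icc]; omega
  have hcong : ∀ (ε : ℝ) (s : ℕ), s ≤ (t : ℕ) →
      soc d α Δt S0 (Function.update y t ε) s = soc d α Δt S0 y s := by
    intro ε s hs
    apply soc_congr
    intro i hi
    apply Function.update_of_ne
    intro h; subst h; omega
  rcases key with hup | hdn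
  · -- increase: ε > 0
    set m := (Finset.Icc 1 (d - (t : ℕ))).inf' hKne (fun k => Su - α ^ k * T) with hm
    have hm0 : 0 < m := by
      rw [hm, Finset.lt_inf'_iff]
      intro k hk
      rw [Finset.mem_Icc] at hk
      linarith [hup k hk.1 hk.2]
    set ε := min xu (m / Δt) with hε
    have hε0 : 0 < ε := lt_min hxu (div_pos hm0 hΔt)
    refine ⟨ε, ne_of_gt hε0, ?_⟩
    simp only [Battery, Set.mem_setOf_eq]
    have hupd := soc_update d α Δt S0 y t hyt ε
    have hbound : ∀ s : ℕ, 1 ≤ s → s ≤ d →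
        Sl ≤ soc d α Δt S0 (Function.update y t ε) s ∧
        soc d α Δt S0 (Function.update y t ε) s ≤ Su := by
      intro s h1 h2
      rcases Nat.lt_or_ge (t : ℕ) s with h | h
      · rw [hupd s h]
        have hks : s - (t : ℕ) ∈ Finset.Icc 1 (d - (t : ℕ)) := by
          rw [Finset.mem_Icc]; omega
        have hmle : m ≤ Su - α ^ (s - (t : ℕ)) * T := Finset.inf'_le _ hks
        have hterm0 : 0 ≤ α ^ (s - 1 - (t : ℕ)) * ε * Δt := by positivity
        have htermle : α ^ (s - 1 - (t : ℕ)) * ε * Δt ≤ m := by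
          have h1' : α ^ (s - 1 - (t : ℕ)) * ε * Δt ≤ ε * Δt := by
            nlinarith [hαpow (s - 1 - (t : ℕ)), hαpos (s - 1 - (t : ℕ))]
          have h2' : ε * Δt ≤ m := by
            have h3' := min_le_right xu (m / Δt)
            have h4' : (m / Δt) * Δt = m := div_mul_cancel₀ m (ne_of_gt hΔt)
            nlinarith
          linarith
        have hgeo : soc d α Δt S0 y s = α ^ (s - (t : ℕ)) * T := hg s (le_of_lt h)
        constructor
        · linarith [(hys s h1 h2).1]
        · rw [hgeo]; linarith
      · rw [hcong ε s h]; exact hys s h1 h2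
    refine ⟨?_, ?_, (hbound d (by omega) le_rfl).1, (hbound d (by omega) le_rfl).2⟩
    · intro s
      rcases eq_or_ne s t with h | h
      · rw [h, Function.update_self]
        exact ⟨by linarith, min_le_left _ _⟩
      · rw [Function.update_of_ne h]; exact hxb s
    · intro s h1 h2
      exact hbound s h1 (by omega)
  · -- decrease: ε < 0
    set m := (Finset.Icc 1 (d - (t : ℕ))).inf' hKne (fun k => α ^ k * T - Sl) with hm
    have hm0 : 0 < m := by
      rw [hm, Finset.lt_inf'_iff]
      intro k hk
      rw [Finset.mem_Icc] at hk
      linarith [hdn k hk.1 hk.2]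
    set ε := max xl (-(m / Δt)) with hε
    have hε0 : ε < 0 := max_lt hxl (neg_lt_zero.mpr (div_pos hm0 hΔt))
    refine ⟨ε, ne_of_lt hε0, ?_⟩
    simp only [Battery, Set.mem_setOf_eq]
    have hupd := soc_update d α Δt S0 y t hyt ε
    have hbound : ∀ s : ℕ, 1 ≤ s → s ≤ d →
        Sl ≤ soc d α Δt S0 (Function.update y t ε) s ∧
        soc d α Δt S0 (Function.update y t ε) s ≤ Su := by
      intro s h1 h2
      rcases Nat.lt_or_ge (t : ℕ) s with h | h
      · rw [hupd s h]
        have hks : s - (t : ℕ) ∈ Finset.Icc 1 (d - (t : ℕ)) := by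
          rw [Finset.mem_Icc]; omega
        have hmle : m ≤ α ^ (s - (t : ℕ)) * T - Sl := Finset.inf'_le _ hks
        have hterm0 : α ^ (s - 1 - (t : ℕ)) * ε * Δt ≤ 0 := by
          nlinarith [mul_pos (hαpos (s - 1 - (t : ℕ))) hΔt]
        have htermge : -m ≤ α ^ (s - 1 - (t : ℕ)) * ε * Δt := by
          have h3' : -(m / Δt) ≤ ε := le_max_right xl (-(m / Δt))
          have h5' : α ^ (s - 1 - (t : ℕ)) * (-(m / Δt)) * Δt ≤ α ^ (s - 1 - (t : ℕ)) * ε * Δt :=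
            mul_le_mul_of_nonneg_right
              (mul_le_mul_of_nonneg_left h3' (le_of_lt (hαpos _))) (le_of_lt hΔt)
          have h6' : α ^ (s - 1 - (t : ℕ)) * (-(m / Δt)) * Δt = -(α ^ (s - 1 - (t : ℕ)) * m) := by
            rw [mul_assoc, neg_mul, div_mul_cancel₀ m (ne_of_gt hΔt), mul_neg]
          have h7' : α ^ (s - 1 - (t : ℕ)) * m ≤ m := by
            nlinarith [hαpow (s - 1 - (t : ℕ))]
          linarith
        have hgeo : soc d α Δt S0 y s = α ^ (s - (t : ℕ)) * T := hg s (le_of_lt h)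
        constructor
        · rw [hgeo]; linarith
        · linarith [(hys s h1 h2).2]
      · rw [hcong ε s h]; exact hys s h1 h2
    refine ⟨?_, ?_, (hbound d (by omega) le_rfl).1, (hbound d (by omega) le_rfl).2⟩
    · intro s
      rcases eq_or_ne s t with h | h
      · rw [h, Function.update_self]
        exact ⟨le_max_left _ _, by linarith⟩
      · rw [Function.update_of_ne h]; exact hxb s
    · intro s h1 h2
      exact hbound s h1 (by omega)
end
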